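/- arXiv:2303.00724 — 5 statements merged into one kernel-verified Lean document; each statement's English description precedes it below -/
import Mathlib

section
/- Fix τ > 2, σ ≥ 0, α > 1. Define ζ_ll := 2 − α, ζ_hl := (τ−1)/α − (τ−2), ζ_hh := 1 − γ_hh(τ−1) where γ_hh := (α−1)/((σ+1)α−(τ−1)) if τ ≤ σ+2 and γ_hh := 1/(σ+1) if τ > σ+2, and ξ_ll := 0, ξ_hl := α−(τ−1), ξ_hh := (σ+1)α−2(τ−1). If ζ_hh < 0 ≤ max(ζ_ll, ζ_hl), then ξ_hh < max(ξ_ll, ξ_hl). -/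
open Classical in
/-- If `ζ_hh < 0 ≤ max(ζ_ll, ζ_hl)` then `ξ_hh < max(ξ_ll, ξ_hl)`. -/
theorem zeta_hh_neg_implies_xi_hh_lt (τ σ α : ℝ) (hτ : 2 < τ) (hσ : 0 ≤ σ) (hα : 1 < α) :
    let γhh : ℝ := if τ ≤ σ + 2 then (α - 1) / ((σ + 1) * α - (τ - 1)) else 1 / (σ + 1)
    let ζll : ℝ := 2 - α
    let ζhl : ℝ := (τ - 1) / α - (τ - 2)
    let ζhh : ℝ := 1 - γhh * (τ - 1)
    let ξll : ℝ := 0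
    let ξhl : ℝ := α - (τ - 1)
    let ξhh : ℝ := (σ + 1) * α - 2 * (τ - 1)
    ζhh < 0 → 0 ≤ max ζll ζhl → ξhh < max ξll ξhl := by
  intro γhh ζll ζhl ζhh ξll ξhl ξhh h1 h2
  have hα0 : (0:ℝ) < α := by linarith
  -- Step 1: ζhh < 0 forces σ + 1 < τ - 1
  have hst : σ + 1 < τ - 1 := by
    by_contra hle
    push_neg at hle
    have hc : τ ≤ σ + 2 := by linarith
    have hD : 0 < (σ + 1) * α - (τ - 1) := by nlinarith
    have hγ : γhh = (α - 1) / ((σ + 1) * α - (τ - 1)) := if_pos hc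
    have h1' : 1 - (α - 1) / ((σ + 1) * α - (τ - 1)) * (τ - 1) < 0 := by
      rw [← hγ]; exact h1
    rw [div_mul_eq_mul_div] at h1'
    have h1'' : 1 < (α - 1) * (τ - 1) / ((σ + 1) * α - (τ - 1)) := by linarith
    have := (one_lt_div hD).mp h1''
    nlinarith
  -- Step 2: case split on h2
  rcases le_max_iff.mp h2 with h | h
  · -- α ≤ 2, so ξhh < 0 = ξll
    have hll : ξhh < ξll := by
      show (σ + 1) * α - 2 * (τ - 1) < 0
      have h' : (0:ℝ) ≤ 2 - α := h
      nlinarith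
    exact lt_of_lt_of_le hll (le_max_left _ _)
  · -- 0 ≤ (τ-1)/α - (τ-2), so α(τ-2) ≤ τ-1, and ξhh < ξhl
    have hmul : (τ - 2) * α ≤ τ - 1 := by
      have : (τ - 2) ≤ (τ - 1) / α := by
        have : (0:ℝ) ≤ (τ - 1) / α - (τ - 2) := h
        linarith
      calc (τ - 2) * α ≤ ((τ - 1) / α) * α := by
            exact mul_le_mul_of_nonneg_right this (le_of_lt hα0)
        _ = τ - 1 := by field_simp
    have hhl : ξhh < ξhl := by
      show (σ + 1) * α - 2 * (τ - 1) < α - (τ - 1)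
      nlinarith [mul_pos (by linarith : (0:ℝ) < τ - 2 - σ) hα0]
    exact lt_of_lt_of_le hhl (le_max_right _ _)
end

section
/- Fix τ > 2, σ ≥ 0, α > 1. With ζ_ll := 2−α, ζ_hl := (τ−1)/α − (τ−2), ζ_hh := 1−γ_hh(τ−1) (γ_hh as in the high-high exponent definition), ξ_⋆ := max(0, α−(τ−1), (σ+1)α−2(τ−1)), and γ_long := (α−1)/(ξ_⋆+τ−1): if max(ζ_ll, ζ_hl, ζ_hh) ≥ 0 then 1 − γ_long(τ−1) = max(ζ_ll, ζ_hl, ζ_hh). -/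
/-- Monotone helper: for nonneg `k` and positive denominators,
`1 - k / max a b = max (1 - k/a) (1 - k/b)`. -/
lemma aux_one_sub_div_max (k a b : ℝ) (hk : 0 ≤ k) (ha : 0 < a) (hb : 0 < b) :
    1 - k / max a b = max (1 - k / a) (1 - k / b) := by
  rcases le_total a b with h | h
  · rw [max_eq_right h, max_eq_right]
    have : k / b ≤ k / a := by gcongr
    linarith
  · rw [max_eq_left h, max_eq_left]
    have : k / a ≤ k / b := by gcongr
    linarith

open Classical in
/-- If `max(ζ_ll, ζ_hl, ζ_hh) ≥ 0` then `1 − γ_long(τ−1) = max(ζ_ll, ζ_hl, ζ_hh)`. -/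
theorem gamma_long_equals_max_zeta (τ σ α : ℝ) (hτ : 2 < τ) (hσ : 0 ≤ σ) (hα : 1 < α) :
    let γhh : ℝ := if τ ≤ σ + 2 then (α - 1) / ((σ + 1) * α - (τ - 1)) else 1 / (σ + 1)
    let ζll : ℝ := 2 - α
    let ζhl : ℝ := (τ - 1) / α - (τ - 2)
    let ζhh : ℝ := 1 - γhh * (τ - 1)
    let ξs : ℝ := max 0 (max (α - (τ - 1)) ((σ + 1) * α - 2 * (τ - 1)))
    let γlong : ℝ := (α - 1) / (ξs + τ - 1)
    0 ≤ max ζll (max ζhl ζhh) →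
      1 - γlong * (τ - 1) = max ζll (max ζhl ζhh) := by
  intro γhh ζll ζhl ζhh ξs γlong hmax
  have hβ : (0:ℝ) < τ - 1 := by linarith
  have hαpos : (0:ℝ) < α := by linarith
  have hs : (1:ℝ) ≤ σ + 1 := by linarith
  have hk : (0:ℝ) ≤ (α - 1) * (τ - 1) := by nlinarith
  set A : ℝ := (σ + 1) * α - (τ - 1) with hA
  have hden : ξs + τ - 1 = max (τ - 1) (max α A) := by
    have : ξs + (τ - 1) = max (0 + (τ-1)) (max ((α - (τ-1)) + (τ-1)) (((σ+1)*α - 2*(τ-1)) + (τ-1))) := by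
      rw [max_add_add_right, max_add_add_right]
    rw [show ξs + τ - 1 = ξs + (τ - 1) by ring, this]
    congr 1 <;> [ring; skip]
    congr 1 <;> ring
  -- rewrite γlong * (τ-1) as k / D
  have hkey : ∀ D : ℝ, (α - 1) / D * (τ - 1) = (α - 1) * (τ - 1) / D := fun D => by ring
  have hζll : ζll = 1 - (α - 1) * (τ - 1) / (τ - 1) := by
    show (2:ℝ) - α = _; rw [mul_div_assoc, div_self hβ.ne', mul_one]; ring
  have hζhl : ζhl = 1 - (α - 1) * (τ - 1) / α := by
    show (τ - 1) / α - (τ - 2) = _; field_simp; ring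
  by_cases hcase : τ ≤ σ + 2
  · -- A > 0, three positive denominators
    have hApos : 0 < A := by nlinarith
    have hζhh : ζhh = 1 - (α - 1) * (τ - 1) / A := by
      show 1 - γhh * (τ - 1) = _
      simp only [γhh, if_pos hcase, ← hA]
      rw [hkey]
    rw [show γlong * (τ - 1) = (α - 1) * (τ - 1) / (ξs + τ - 1) by
      simp only [γlong]; rw [show ξs + τ - 1 = ξs + τ - 1 from rfl]; ring,
      hden, aux_one_sub_div_max _ _ _ hk hβ (lt_max_iff.mpr (Or.inl hαpos)),
      aux_one_sub_div_max _ _ _ hk hαpos hApos, hζll, hζhl, hζhh]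
  · -- τ > σ + 2 : ζhh < 0
    push_neg at hcase
    have hζhhneg : ζhh < 0 := by
      show 1 - γhh * (τ - 1) < 0
      simp only [γhh, if_neg (not_le.mpr hcase)]
      rw [sub_neg, div_mul_eq_mul_div, one_mul, lt_div_iff₀ (by linarith : (0:ℝ) < σ + 1)]
      linarith
    have h2 : 0 ≤ max ζll ζhl := by
      rcases le_max_iff.mp hmax with h | h
      · exact le_max_of_le_left h
      rcases le_max_iff.mp h with h | h
      · exact le_max_of_le_right h
      · linarith
    -- A ≤ max (τ-1) α
    have hAle : A ≤ max (τ - 1) α := by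
      rcases le_max_iff.mp h2 with h | h
      · -- ζll ≥ 0 : α ≤ 2, A ≤ τ-1
        have hα2 : α ≤ 2 := by simpa [ζll] using h
        have : A ≤ τ - 1 := by nlinarith
        exact le_max_of_le_left this
      · -- ζhl ≥ 0 : (τ-1)(α-1) ≤ α, A ≤ α
        have h' : (τ - 1) * (α - 1) ≤ α := by
          have := h
          simp only [ζhl, sub_nonneg] at this
          rw [le_div_iff₀ hαpos] at this
          nlinarith
        have : A ≤ α := by nlinarith
        exact le_max_of_le_right this
    have hden2 : ξs + τ - 1 = max (τ - 1) α := by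
      rw [hden, ← max_assoc, max_eq_left hAle]
    have hRHS : max ζll (max ζhl ζhh) = max ζll ζhl := by
      apply le_antisymm
      · apply max_le (le_max_left _ _)
        apply max_le (le_max_right _ _)
        linarith
      · exact max_le_max le_rfl (le_max_left _ _)
    rw [hRHS, show γlong * (τ - 1) = (α - 1) * (τ - 1) / (ξs + τ - 1) by
      simp only [γlong]; ring, hden2,
      aux_one_sub_div_max _ _ _ hk hβ hαpos, hζll, hζhl]
end

section
/- Fix τ > 2, σ ≥ 0, α > 1. With ζ_ll := 2−α, ζ_hl := (τ−1)/α−(τ−2), ζ_hh as in the high-high exponent definition, ξ_⋆ := max(0, α−(τ−1), (σ+1)α−2(τ−1)), and γ_long := (α−1)/(ξ_⋆+τ−1): if max(ζ_ll, ζ_hl, ζ_hh) < 0, then 1 − γ_long(τ−1) < 0. -/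
/-!
`ζ_ll < 0` gives `α > 2`, `ζ_hl < 0` gives `α < (α - 1)(τ - 1)` and `ζ_hh < 0` forces `σ + 2 < τ`.
These three facts bound each term of `ξ_⋆` strictly by `(α - 2)(τ - 1)`, which is exactly the
inequality `γ_long (τ - 1) > 1`.
-/

namespace ScalingExponents

variable {τ σ α : ℝ}

noncomputable def gammaHH (τ σ α : ℝ) : ℝ :=
  if τ ≤ σ + 2 then (α - 1) / ((σ + 1) * α - (τ - 1)) else 1 / (σ + 1)

noncomputable def zetaHH (τ σ α : ℝ) : ℝ := 1 - gammaHH τ σ α * (τ - 1)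

noncomputable def xiStar (τ σ α : ℝ) : ℝ :=
  max 0 (max (α - (τ - 1)) ((σ + 1) * α - 2 * (τ - 1)))

noncomputable def gammaLong (τ σ α : ℝ) : ℝ := (α - 1) / (xiStar τ σ α + τ - 1)

-- In the regime `τ ≤ σ + 2` the exponent `ζ_hh` is never negative, so only the other branch occurs.
theorem add_two_lt_of_zetaHH_neg (hτ : 1 < τ) (hα : 1 < α) (h : zetaHH τ σ α < 0) :
    σ + 2 < τ := by
  rw [zetaHH, gammaHH] at h
  split_ifs at h with hc
  · exfalso
    set D := (σ + 1) * α - (τ - 1)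
    rcases le_or_gt D 0 with hD | hD
    · have : (α - 1) / D * (τ - 1) ≤ 0 :=
        mul_nonpos_of_nonpos_of_nonneg (div_nonpos_of_nonneg_of_nonpos (by linarith) hD)
          (by linarith)
      linarith
    · have : D < (α - 1) * (τ - 1) := by
        rw [div_mul_eq_mul_div, sub_neg, one_lt_div hD] at h
        exact h
      nlinarith
  · exact not_le.mp hc

theorem lt_sub_one_mul_sub_one_of_div_sub_neg (hα : 0 < α) (h : (τ - 1) / α - (τ - 2) < 0) :
    α < (α - 1) * (τ - 1) := by
  rw [sub_neg, div_lt_iff₀ hα] at h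
  linarith

theorem xiStar_lt (hτ : 1 < τ) (hα : 2 < α) (hhl : α < (α - 1) * (τ - 1)) (hhh : σ + 2 < τ) :
    xiStar τ σ α < (α - 2) * (τ - 1) := by
  refine max_lt (by nlinarith) (max_lt (by linarith) ?_)
  nlinarith

theorem one_lt_gammaLong_mul (hτ : 1 < τ) (hξ : xiStar τ σ α < (α - 2) * (τ - 1)) :
    1 < gammaLong τ σ α * (τ - 1) := by
  have hden : 0 < xiStar τ σ α + τ - 1 := by
    have : 0 ≤ xiStar τ σ α := le_max_left _ _
    linarith
  rw [gammaLong, div_mul_eq_mul_div, one_lt_div hden]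
  linarith

end ScalingExponents

open ScalingExponents

open Classical in
theorem gamma_long_neg_general (τ σ α : ℝ) (hτ : 2 < τ) :
    let γhh : ℝ := if τ ≤ σ + 2 then (α - 1) / ((σ + 1) * α - (τ - 1)) else 1 / (σ + 1)
    let ζll : ℝ := 2 - α
    let ζhl : ℝ := (τ - 1) / α - (τ - 2)
    let ζhh : ℝ := 1 - γhh * (τ - 1)
    let ξs : ℝ := max 0 (max (α - (τ - 1)) ((σ + 1) * α - 2 * (τ - 1)))
    let γlong : ℝ := (α - 1) / (ξs + τ - 1)
    max ζll (max ζhl ζhh) < 0 →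
      1 - γlong * (τ - 1) < 0 := by
  intro γhh ζll ζhl ζhh ξs γlong h
  obtain ⟨hll, hhl, hhh⟩ : 2 - α < 0 ∧ (τ - 1) / α - (τ - 2) < 0 ∧ zetaHH τ σ α < 0 := by
    rw [max_lt_iff, max_lt_iff] at h
    exact h
  have hα₂ : 2 < α := by linarith
  have hτ₁ : 1 < τ := by linarith
  have hξ := xiStar_lt hτ₁ hα₂ (lt_sub_one_mul_sub_one_of_div_sub_neg (by linarith) hhl)
    (add_two_lt_of_zetaHH_neg hτ₁ (by linarith) hhh)
  show 1 - gammaLong τ σ α * (τ - 1) < 0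
  linarith [one_lt_gammaLong_mul hτ₁ hξ]

open Classical in
/-- If `max(ζ_ll, ζ_hl, ζ_hh) < 0` then `1 − γ_long(τ−1) < 0`. -/
theorem gamma_long_neg (τ σ α : ℝ) (hτ : 2 < τ) (hσ : 0 ≤ σ) (hα : 1 < α) :
    let γhh : ℝ := if τ ≤ σ + 2 then (α - 1) / ((σ + 1) * α - (τ - 1)) else 1 / (σ + 1)
    let ζll : ℝ := 2 - α
    let ζhl : ℝ := (τ - 1) / α - (τ - 2)
    let ζhh : ℝ := 1 - γhh * (τ - 1)
    let ξs : ℝ := max 0 (max (α - (τ - 1)) ((σ + 1) * α - 2 * (τ - 1)))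
    let γlong : ℝ := (α - 1) / (ξs + τ - 1)
    max ζll (max ζhl ζhh) < 0 →
      1 - γlong * (τ - 1) < 0 :=
  gamma_long_neg_general τ σ α hτ
end

section
/- Let G_n ⊆ G_{n+1} ⊆ … ⊆ G_N be an increasing (nested) sequence of finite graphs for n ≤ N, with largest and second-largest components C_m^{(1)} and C_m^{(2)} of G_m (sizes counted in vertices). Suppose (k_m) and (K_m) are nonnegative sequences with k_{m+1} < K_m for all m. If for every m ∈ [n, N−1] it holds that |C_m^{(1)}| ≥ K_m and |C_{m+1}^{(2)}| ≤ k_{m+1}, then C_n^{(1)} ⊆ C_N^{(1)}. -/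
/-- A set of vertices is a connected component of a simple graph if it is the
reachability class of some vertex. -/
def IsComponent {V : Type*} (G : SimpleGraph V) (C : Set V) : Prop :=
  ∃ v : V, C = {u | G.Reachable v u}

/-- Deterministic core of the 'leaving the giant' argument: in an increasing
family of finite graphs `G n ⊆ … ⊆ G N`, if for each `m` the chosen largest
component `C1 m` has size at least `K m`, every other component of `G (m+1)`
has size at most `k (m+1)`, and `k (m+1) < K m`, then `C1 n ⊆ C1 N`. -/
theorem largest_component_nested {V : Type*} [Fintype V]
    (n N : ℕ) (hnN : n ≤ N)
    (G : ℕ → SimpleGraph V)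
    (hmono : ∀ m, n ≤ m → m < N → G m ≤ G (m + 1))
    (C1 : ℕ → Set V)
    (hC1 : ∀ m, n ≤ m → m ≤ N → IsComponent (G m) (C1 m))
    (k K : ℕ → ℝ) (hk : ∀ m, 0 ≤ k m) (hK : ∀ m, 0 ≤ K m)
    (hkK : ∀ m, k (m + 1) < K m)
    (hlarge : ∀ m, n ≤ m → m < N → K m ≤ ((C1 m).ncard : ℝ))
    (hsecond : ∀ m, n ≤ m → m < N → ∀ D : Set V,
        IsComponent (G (m + 1)) D → D ≠ C1 (m + 1) → ((D.ncard : ℝ)) ≤ k (m + 1)) :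
    C1 n ⊆ C1 N := by
  -- First, one-step inclusion
  have step : ∀ m, n ≤ m → m < N → C1 m ⊆ C1 (m + 1) := by
    intro m hnm hmN
    obtain ⟨v, hv⟩ := hC1 m hnm hmN.le
    set D : Set V := {u | (G (m+1)).Reachable v u} with hD
    have hDcomp : IsComponent (G (m+1)) D := ⟨v, rfl⟩
    have hsub : C1 m ⊆ D := by
      intro u hu
      rw [hv] at hu
      exact SimpleGraph.Reachable.mono (hmono m hnm hmN) hu
    have hDeq : D = C1 (m + 1) := by
      by_contra hne
      have h1 : ((D.ncard : ℝ)) ≤ k (m + 1) := hsecond m hnm hmN D hDcomp hne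
      have h2 : (C1 m).ncard ≤ D.ncard :=
        Set.ncard_le_ncard hsub (Set.toFinite D)
      have h3 : K m ≤ (D.ncard : ℝ) :=
        le_trans (hlarge m hnm hmN) (by exact_mod_cast h2)
      linarith [hkK m]
    exact hDeq ▸ hsub
  -- Induct from n to N
  have main : ∀ M, n ≤ M → M ≤ N → C1 n ⊆ C1 M := by
    intro M
    induction M with
    | zero => intro h1 _; have : n = 0 := Nat.le_zero.mp h1; subst this; exact subset_rfl
    | succ M ih =>
      intro h1 h2
      rcases Nat.lt_or_ge n (M+1) with hlt | hge
      · have hnM : n ≤ M := Nat.lt_succ_iff.mp hlt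
        exact (ih hnM (Nat.le_of_succ_le h2)).trans (step M hnM h2)
      · have : n = M + 1 := le_antisymm h1 hge
        subst this; exact subset_rfl
  exact main N hnN le_rfl
end

section
/- Fix σ ≥ 0, β > 0, d ≥ 1 and set C_β := (2β)^{1/d}. Let 0 < γ ≤ 1/(σ+1) and r ≥ C_β. Suppose t ≥ 2C_β and ν ∈ (0,1), and set w_u := max(1, ((1−ν)t/C_β)^{γd}) and w_v := max(1, (νt/C_β)^{γd}). Then β · max(w_u, w_v) · min(w_u, w_v)^σ / t^d ≤ 1/2. -/
/-- Two vertices lying exactly on the `γ`-suppressed mark profile at distances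
`(1−ν)t` and `νt` on opposite sides of the boundary sphere (hence at Euclidean
distance at least `t`) have connection kernel value at most `1/2`:
`β · max(w_u, w_v) · min(w_u, w_v)^σ / t^d ≤ 1/2`, where
`w_u = max(1, ((1−ν)t/C_β)^{γd})`, `w_v = max(1, (νt/C_β)^{γd})`,
`C_β = (2β)^{1/d}`, `0 < γ ≤ 1/(σ+1)`. -/
theorem profile_kernel_le_half (d : ℕ) (hd : 1 ≤ d) (σ β γ r t ν : ℝ)
    (hσ : 0 ≤ σ) (hβ : 0 < β) (hγ0 : 0 < γ) (hγ : γ ≤ 1 / (σ + 1))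
    (hr : (2 * β) ^ (1 / (d : ℝ)) ≤ r)
    (ht : 2 * (2 * β) ^ (1 / (d : ℝ)) ≤ t) (hν0 : 0 < ν) (hν1 : ν < 1) :
    let Cβ : ℝ := (2 * β) ^ (1 / (d : ℝ))
    let wu : ℝ := max 1 (((1 - ν) * t / Cβ) ^ (γ * (d : ℝ)))
    let wv : ℝ := max 1 ((ν * t / Cβ) ^ (γ * (d : ℝ)))
    β * max wu wv * (min wu wv) ^ σ / t ^ (d : ℝ) ≤ 1 / 2 := by
  intro Cβ wu wv
  have hd0 : (0:ℝ) < d := by exact_mod_cast hd.trans_lt' (by norm_num)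
  have h2β : (0:ℝ) < 2 * β := by linarith
  have hCβ : 0 < Cβ := Real.rpow_pos_of_pos h2β _
  have ht0 : 0 < t := lt_of_lt_of_le (by linarith) ht
  set X : ℝ := t / Cβ with hX
  have hX1 : 1 ≤ X := by
    rw [hX, le_div_iff₀ hCβ]; linarith
  have hX0 : 0 ≤ X := by linarith
  set M : ℝ := X ^ (γ * (d:ℝ)) with hM
  have hM1 : 1 ≤ M := Real.one_le_rpow hX1 (by positivity)
  have hwu : wu ≤ M := by
    apply max_le hM1
    apply Real.rpow_le_rpow (div_nonneg (by nlinarith) hCβ.le) _ (by positivity)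
    apply div_le_div_of_nonneg_right ?_ hCβ.le
    · nlinarith
  have hwv : wv ≤ M := by
    apply max_le hM1
    apply Real.rpow_le_rpow (div_nonneg (by nlinarith) hCβ.le) _ (by positivity)
    apply div_le_div_of_nonneg_right ?_ hCβ.le
    · nlinarith
  have hmax : max wu wv ≤ M := max_le hwu hwv
  have hmin0 : 0 ≤ min wu wv := le_trans (by norm_num) (le_min (le_max_left _ _) (le_max_left _ _))
  have hminσ : (min wu wv) ^ σ ≤ M ^ σ :=
    Real.rpow_le_rpow hmin0 (le_trans (min_le_left _ _) hwu) hσ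
  have hM0 : 0 < M := lt_of_lt_of_le one_pos hM1
  have hexp : γ * (d:ℝ) * (1 + σ) ≤ (d:ℝ) := by
    rw [le_div_iff₀ (by linarith : (0:ℝ) < σ + 1)] at hγ
    nlinarith
  have key : M * M ^ σ ≤ X ^ (d:ℝ) := by
    have heq : M * M ^ σ = X ^ (γ * (d:ℝ) * (1 + σ)) := by
      rw [hM, ← Real.rpow_mul hX0, ← Real.rpow_add (lt_of_lt_of_le one_pos hX1)]
      ring_nf
    rw [heq]
    exact Real.rpow_le_rpow_of_exponent_le hX1 hexp
  have htd : 0 < t ^ (d:ℝ) := Real.rpow_pos_of_pos ht0 _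
  have hCd : Cβ ^ (d:ℝ) = 2 * β := by
    show ((2*β) ^ (1/(d:ℝ))) ^ (d:ℝ) = 2*β
    rw [← Real.rpow_mul h2β.le, one_div, inv_mul_cancel₀ (ne_of_gt hd0), Real.rpow_one]
  have hXd : X ^ (d:ℝ) = t ^ (d:ℝ) / (2*β) := by
    rw [hX, Real.div_rpow ht0.le hCβ.le, hCd]
  calc β * max wu wv * (min wu wv) ^ σ / t ^ (d:ℝ)
      ≤ β * M * M ^ σ / t ^ (d:ℝ) := by gcongr
    _ ≤ β * X ^ (d:ℝ) / t ^ (d:ℝ) := by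
        rw [mul_assoc]; gcongr
    _ = 1 / 2 := by rw [hXd]; field_simp
end
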